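/- arXiv:2202.09104 — 2 statements merged into one kernel-verified Lean document; each statement's English description precedes it below -/
import Mathlib

section
/- Local formality is hereditary: if A is a locally formal central arrangement (i.e. A_X is formal for every X ∈ L(A)) and Z ∈ L(A), then the restriction A^Z is locally formal. -/
open Submodule

section ArrangementBasics

variable {𝕂 : Type*} [Field 𝕂] {V : Type*} [AddCommGroup V] [Module 𝕂 V]

/-- `H` is a (linear) hyperplane: the kernel of a nonzero linear form. -/
def IsHyperplane (H : Submodule 𝕂 V) : Prop :=
  ∃ f : Module.Dual 𝕂 V, f ≠ 0 ∧ LinearMap.ker f = H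

/-- A central arrangement: a finite set of linear hyperplanes. -/
def IsArrangement (A : Set (Submodule 𝕂 V)) : Prop :=
  A.Finite ∧ ∀ H ∈ A, IsHyperplane H

/-- The intersection lattice `L(A)`: all intersections of subsets of `A`
(with the ambient space `⊤ = sInf ∅` included). -/
def interLattice (A : Set (Submodule 𝕂 V)) : Set (Submodule 𝕂 V) :=
  {X | ∃ B ⊆ A, X = sInf B}

/-- The rank of an intersection: its codimension in the ambient space. -/
noncomputable def rk (X : Submodule 𝕂 V) : ℕ := Module.finrank 𝕂 (V ⧸ X)

/-- The localization `A_X` of `A` at `X`: all hyperplanes of `A` containing `X`. -/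
def locz (A : Set (Submodule 𝕂 V)) (X : Submodule 𝕂 V) : Set (Submodule 𝕂 V) :=
  {H | H ∈ A ∧ X ≤ H}

/-- The restriction `A^Z` of `A` to `Z`, an arrangement in (the vector space) `Z`:
the subspaces `Z ∩ H` for `H ∈ A ∖ A_Z`, viewed as submodules of `Z`. -/
def restr (A : Set (Submodule 𝕂 V)) (Z : Submodule 𝕂 V) : Set (Submodule 𝕂 ↥Z) :=
  {K | ∃ H ∈ A, ¬ Z ≤ H ∧ K = (Z ⊓ H).comap Z.subtype}

/-- `α` is a choice of defining linear forms for the arrangement `A`. -/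
def IsDefiningForms (A : Set (Submodule 𝕂 V)) (α : Submodule 𝕂 V → Module.Dual 𝕂 V) : Prop :=
  ∀ H ∈ A, LinearMap.ker (α H) = H

/-- The relation space `F(A)` with respect to the chosen defining forms `α`:
the kernel of `⊕_{H ∈ A} 𝕂·e_H → V*`, `e_H ↦ α_H`, realized as the space of finitely
supported coefficient functions supported on `A` whose linear combination vanishes. -/
noncomputable def relSpace (A : Set (Submodule 𝕂 V)) (α : Submodule 𝕂 V → Module.Dual 𝕂 V) :
    Submodule 𝕂 (Submodule 𝕂 V →₀ 𝕂) :=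
  Finsupp.supported 𝕂 𝕂 A ⊓ LinearMap.ker (Finsupp.linearCombination 𝕂 α)

/-- `F_2(A)`: the span of the elements of `F(A)` of length at most `3`. -/
noncomputable def relSpace2 (A : Set (Submodule 𝕂 V)) (α : Submodule 𝕂 V → Module.Dual 𝕂 V) :
    Submodule 𝕂 (Submodule 𝕂 V →₀ 𝕂) :=
  Submodule.span 𝕂 {c | c ∈ relSpace A α ∧ c.support.card ≤ 3}

/-- `A` is formal if `F_2(A) = F(A)` (for any choice of defining forms). -/
def IsFormal (A : Set (Submodule 𝕂 V)) : Prop :=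
  ∀ α : Submodule 𝕂 V → Module.Dual 𝕂 V,
    IsDefiningForms A α → relSpace2 A α = relSpace A α

end ArrangementBasics


section AuxLemmas

variable {𝕂 : Type*} [Field 𝕂] {V : Type*} [AddCommGroup V] [Module 𝕂 V]

lemma exists_smul_of_ker_le_ker {g f : Module.Dual 𝕂 V}
    (h : LinearMap.ker g ≤ LinearMap.ker f) : ∃ t : 𝕂, f = t • g := by
  have h' : (⨅ _ : Unit, LinearMap.ker g) ≤ LinearMap.ker f := by rwa [iInf_const]
  have := mem_span_of_iInf_ker_le_ker (L := fun _ : Unit => g) h'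
  rw [Set.range_const, Submodule.mem_span_singleton] at this
  obtain ⟨t, ht⟩ := this
  exact ⟨t, ht.symm⟩

lemma comap_subtype_inf_eq (Z H : Submodule 𝕂 V) :
    (Z ⊓ H).comap Z.subtype = H.comap Z.subtype := by
  rw [Submodule.comap_inf, Submodule.comap_subtype_self, top_inf_eq]

lemma sInf_locz {A : Set (Submodule 𝕂 V)} {Z : Submodule 𝕂 V} (hZ : Z ∈ interLattice A) :
    sInf (locz A Z) = Z := by
  obtain ⟨B, hBA, rfl⟩ := hZ
  refine le_antisymm (sInf_le_sInf fun H hH => ⟨hBA hH, sInf_le hH⟩)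
    (le_sInf fun H hH => hH.2)

lemma relSpace2_le (A : Set (Submodule 𝕂 V)) (α : Submodule 𝕂 V → Module.Dual 𝕂 V) :
    relSpace2 A α ≤ relSpace A α :=
  Submodule.span_le.mpr fun _ hc => hc.1

lemma exists_defining {A : Set (Submodule 𝕂 V)} (hA : IsArrangement A) :
    ∃ α : Submodule 𝕂 V → Module.Dual 𝕂 V, IsDefiningForms A α := by
  classical
  refine ⟨fun H => if h : IsHyperplane H then h.choose else 0, fun H hH => ?_⟩
  have h : IsHyperplane H := hA.2 H hH
  simp only [dif_pos h]
  exact h.choose_spec.2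

/-- Key lemma: the restriction of a formal arrangement to an element of its
intersection lattice is formal. -/
lemma restriction_formal {A : Set (Submodule 𝕂 V)} (hA : IsArrangement A)
    (hform : IsFormal A) {Z : Submodule 𝕂 V} (hZ : Z ∈ interLattice A) :
    IsFormal (restr A Z) := by
  classical
  intro β hβ
  obtain ⟨α, hα⟩ := exists_defining hA
  set Km : Submodule 𝕂 V → Submodule 𝕂 ↥Z := fun H => H.comap Z.subtype with hKmdef
  have hKmem : ∀ H, H ∈ A → ¬ Z ≤ H → Km H ∈ restr A Z := fun H h1 h2 =>
    ⟨H, h1, h2, (comap_subtype_inf_eq Z H).symm⟩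
  have hchoice : ∀ H, H ∈ A ∧ ¬ Z ≤ H →
      ∃ t : 𝕂, t ≠ 0 ∧ (α H).comp Z.subtype = t • β (Km H) := by
    intro H h
    have hker : LinearMap.ker ((α H).comp Z.subtype) = Km H := by
      rw [LinearMap.ker_comp, hα H h.1]
    have hkerβ : LinearMap.ker (β (Km H)) = Km H := hβ _ (hKmem H h.1 h.2)
    obtain ⟨t, ht⟩ := exists_smul_of_ker_le_ker
      (g := β (Km H)) (f := (α H).comp Z.subtype) (by rw [hkerβ, hker])
    refine ⟨t, ?_, ht⟩
    rintro rfl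
    rw [zero_smul] at ht
    have h2 : LinearMap.ker ((α H).comp Z.subtype) = ⊤ := by
      rw [ht]; exact LinearMap.ker_zero
    rw [hker] at h2
    exact h.2 (Submodule.comap_subtype_eq_top.mp h2)
  set t' : Submodule 𝕂 V → 𝕂 :=
    fun H => if h : H ∈ A ∧ ¬ Z ≤ H then (hchoice H h).choose else 0 with ht'def
  have ht'1 : ∀ H, H ∈ A → ¬ Z ≤ H →
      t' H ≠ 0 ∧ (α H).comp Z.subtype = t' H • β (Km H) := by
    intro H h1 h2
    have h : H ∈ A ∧ ¬ Z ≤ H := ⟨h1, h2⟩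
    simp only [ht'def, dif_pos h]
    exact ⟨(hchoice H h).choose_spec.1, (hchoice H h).choose_spec.2⟩
  have ht'0 : ∀ H, ¬ (H ∈ A ∧ ¬ Z ≤ H) → t' H = 0 := fun H h => by
    simp only [ht'def, dif_neg h]
  set π : (Submodule 𝕂 V →₀ 𝕂) →ₗ[𝕂] (Submodule 𝕂 ↥Z →₀ 𝕂) :=
    Finsupp.lsum 𝕂 (fun H => t' H • Finsupp.lsingle (Km H)) with hπdef
  have hπs : ∀ H (b : 𝕂), π (Finsupp.single H b) = Finsupp.single (Km H) (t' H * b) := by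
    intro H b
    rw [hπdef, Finsupp.lsum_single, LinearMap.smul_apply, Finsupp.lsingle_apply,
      Finsupp.smul_single, smul_eq_mul]
  have hπ : ∀ c : Submodule 𝕂 V →₀ 𝕂,
      π c = c.sum fun H b => Finsupp.single (Km H) (t' H * b) := by
    intro c
    conv_lhs => rw [← c.sum_single, map_finsuppSum]
    exact Finset.sum_congr rfl fun H hH => hπs H (c H)
  have hπsupp : ∀ c : Submodule 𝕂 V →₀ 𝕂, (π c).support ⊆ c.support.image Km := by
    intro c
    rw [hπ c]
    refine Finsupp.support_sum.trans ?_
    intro k hk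
    obtain ⟨H, hH, hk2⟩ := Finset.mem_biUnion.mp hk
    exact Finset.mem_image.mpr ⟨H, hH, ((Finsupp.mem_support_single _ _ _).mp hk2).1.symm⟩
  have hπsupp2 : ∀ c ∈ Finsupp.supported 𝕂 𝕂 A, π c ∈ Finsupp.supported 𝕂 𝕂 (restr A Z) := by
    intro c hc
    rw [Finsupp.mem_supported] at hc ⊢
    intro k hk
    rw [Finset.mem_coe, hπ c] at hk
    obtain ⟨H, hH, hk2⟩ := Finset.mem_biUnion.mp (Finsupp.support_sum hk)
    obtain ⟨rfl, hne⟩ := (Finsupp.mem_support_single _ _ _).mp hk2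
    have ht : t' H ≠ 0 := fun h => hne (by rw [h, zero_mul])
    by_cases h : H ∈ A ∧ ¬ Z ≤ H
    · exact hKmem H h.1 h.2
    · exact absurd (ht'0 H h) ht
  have hπker : ∀ c ∈ Finsupp.supported 𝕂 𝕂 A,
      Finsupp.linearCombination 𝕂 β (π c) =
        Z.subtype.dualMap (Finsupp.linearCombination 𝕂 α c) := by
    intro c hc
    rw [Finsupp.mem_supported] at hc
    rw [hπ c, map_finsuppSum, Finsupp.linearCombination_apply, map_finsuppSum]
    refine Finsupp.sum_congr fun H hH => ?_
    rw [Finsupp.linearCombination_single, map_smul]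
    by_cases h2 : Z ≤ H
    · have h0 : t' H = 0 := ht'0 H fun hh => hh.2 h2
      have hz : Z.subtype.dualMap (α H) = 0 := by
        ext x
        have : (x : V) ∈ H := h2 x.2
        rw [← hα H (hc hH)] at this
        simpa [LinearMap.dualMap_apply] using this
      rw [h0, zero_mul, zero_smul, hz, smul_zero]
    · obtain ⟨hne, heq⟩ := ht'1 H (hc hH) h2
      rw [LinearMap.dualMap_apply', heq, smul_smul, mul_comm]
  have hπrel : ∀ c ∈ relSpace A α, π c ∈ relSpace (restr A Z) β := by
    intro c hc
    obtain ⟨h1, h2⟩ := Submodule.mem_inf.mp hc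
    refine Submodule.mem_inf.mpr ⟨hπsupp2 c h1, ?_⟩
    rw [LinearMap.mem_ker, hπker c h1, LinearMap.mem_ker.mp h2, map_zero]
  have hπ2 : Submodule.map π (relSpace2 A α) ≤ relSpace2 (restr A Z) β := by
    rw [relSpace2, Submodule.map_span]
    apply Submodule.span_mono
    rintro _ ⟨c, ⟨hc1, hc2⟩, rfl⟩
    exact ⟨hπrel c hc1,
      le_trans (Finset.card_le_card (hπsupp c)) (le_trans Finset.card_image_le hc2)⟩
  refine le_antisymm (relSpace2_le _ _) fun r hr => ?_
  obtain ⟨hr1, hr2⟩ := Submodule.mem_inf.mp hr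
  rw [Finsupp.mem_supported] at hr1
  rw [LinearMap.mem_ker] at hr2
  have hHcE : ∀ K : Submodule 𝕂 ↥Z, ∃ H : Submodule 𝕂 V,
      K ∈ restr A Z → (H ∈ A ∧ ¬ Z ≤ H ∧ K = Km H) := by
    intro K
    by_cases h : K ∈ restr A Z
    · obtain ⟨H, h1, h2, h3⟩ := h
      exact ⟨H, fun _ => ⟨h1, h2, by rw [h3, comap_subtype_inf_eq]⟩⟩
    · exact ⟨⊥, fun hk => (h hk).elim⟩
  choose Hc hHc using hHcE
  set c₁ : Submodule 𝕂 V →₀ 𝕂 :=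
    r.sum fun K a => Finsupp.single (Hc K) ((t' (Hc K))⁻¹ * a) with hc₁def
  have hrK : ∀ K ∈ r.support, K ∈ restr A Z := fun K hK => hr1 hK
  have hπc₁ : π c₁ = r := by
    rw [hc₁def, map_finsuppSum]
    have : ∀ K ∈ r.support,
        π (Finsupp.single (Hc K) ((t' (Hc K))⁻¹ * r K)) = Finsupp.single K (r K) := by
      intro K hK
      obtain ⟨hA1, hA2, hA3⟩ := hHc K (hrK K hK)
      have ht := (ht'1 (Hc K) hA1 hA2).1
      have hval : t' (Hc K) * ((t' (Hc K))⁻¹ * r K) = r K := by field_simp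
      rw [hπs, ← hA3, hval]
    rw [Finsupp.sum_congr this, Finsupp.sum_single]
  set φ := Finsupp.linearCombination 𝕂 α c₁ with hφdef
  have hφZ : Z.subtype.dualMap φ = 0 := by
    rw [hφdef, hc₁def, map_finsuppSum, map_finsuppSum]
    have : ∀ K ∈ r.support,
        Z.subtype.dualMap (Finsupp.linearCombination 𝕂 α
          (Finsupp.single (Hc K) ((t' (Hc K))⁻¹ * r K))) = r K • β K := by
      intro K hK
      obtain ⟨hA1, hA2, hA3⟩ := hHc K (hrK K hK)
      obtain ⟨ht, heq⟩ := ht'1 (Hc K) hA1 hA2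
      have hval : (t' (Hc K))⁻¹ * r K * t' (Hc K) = r K := by field_simp
      rw [Finsupp.linearCombination_single, map_smul, LinearMap.dualMap_apply', heq, ← hA3,
        smul_smul, hval]
    rw [Finsupp.sum_congr (g2 := fun K a => a • β K) this, ← Finsupp.linearCombination_apply, hr2]
  have hZker : Z ≤ LinearMap.ker φ := by
    intro x hx
    have := LinearMap.congr_fun hφZ ⟨x, hx⟩
    simpa [LinearMap.dualMap_apply] using this
  have hBfin : (locz A Z).Finite := hA.1.subset fun H hH => hH.1
  have hφspan : φ ∈ Submodule.span 𝕂 (α '' locz A Z) := by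
    have hfin : Finite ↥(locz A Z) := hBfin.to_subtype
    have h1 : (⨅ i : ↥(locz A Z), LinearMap.ker (α ↑i)) ≤ LinearMap.ker φ := by
      have he : (⨅ i : ↥(locz A Z), LinearMap.ker (α ↑i)) = sInf (locz A Z) := by
        rw [sInf_eq_iInf']
        exact iInf_congr fun i => hα ↑i i.2.1
      rw [he, sInf_locz hZ]
      exact hZker
    have := mem_span_of_iInf_ker_le_ker (L := fun i : ↥(locz A Z) => α ↑i) h1
    rwa [← Set.image_eq_range] at this
  obtain ⟨d, hd1, hd2⟩ := (Finsupp.mem_span_image_iff_linearCombination 𝕂).mp hφspan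
  have hc₁supp : c₁ ∈ Finsupp.supported 𝕂 𝕂 A := by
    rw [Finsupp.mem_supported]
    intro k hk
    rw [Finset.mem_coe, hc₁def] at hk
    obtain ⟨K, hK, hk2⟩ := Finset.mem_biUnion.mp (Finsupp.support_sum hk)
    obtain ⟨rfl, -⟩ := (Finsupp.mem_support_single _ _ _).mp hk2
    exact (hHc K (hrK K hK)).1
  have hRrel : c₁ - d ∈ relSpace A α := by
    refine Submodule.mem_inf.mpr ⟨?_, ?_⟩
    · exact Submodule.sub_mem _ hc₁supp
        (Finsupp.supported_mono (fun H hH => hH.1) hd1)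
    · rw [LinearMap.mem_ker, map_sub, hd2, ← hφdef, sub_self]
  have hπd : π d = 0 := by
    rw [hπ d, Finsupp.sum]
    refine Finset.sum_eq_zero fun H hH => ?_
    have hHB : H ∈ locz A Z := (Finsupp.mem_supported 𝕂 d).mp hd1 hH
    rw [ht'0 H (fun hh => hh.2 hHB.2), zero_mul, Finsupp.single_zero]
  have hπR : π (c₁ - d) = r := by rw [map_sub, hπc₁, hπd, sub_zero]
  refine hπ2 ⟨c₁ - d, ?_, hπR⟩
  rw [hform α hα]
  exact hRrel

end AuxLemmas

/-- **Local formality is hereditary** (`cor:restrition-tot-formal`):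
if every localization `A_X`, `X ∈ L(A)`, of the central arrangement `A` is formal,
then for every `Z ∈ L(A)` every localization of the restriction `A^Z` is formal. -/
theorem local_formality_is_hereditary {𝕂 : Type*} [Field 𝕂] {ℓ : ℕ}
    (A : Set (Submodule 𝕂 (Fin ℓ → 𝕂))) (hA : IsArrangement A)
    (hlocformal : ∀ X ∈ interLattice A, IsFormal (locz A X))
    (Z : Submodule 𝕂 (Fin ℓ → 𝕂)) (hZ : Z ∈ interLattice A) :
    ∀ Y ∈ interLattice (restr A Z), IsFormal (locz (restr A Z) Y) := by
  intro Y hY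
  set Yh : Submodule 𝕂 (Fin ℓ → 𝕂) := Submodule.map Z.subtype Y with hYhdef
  have hYZ : Yh ≤ Z := Submodule.map_subtype_le Z Y
  -- (i) Yh ∈ interLattice A
  have hYh : Yh ∈ interLattice A := by
    obtain ⟨B, hBsub, rfl⟩ := hY
    have hE : ∀ K : Submodule 𝕂 ↥Z, ∃ H : Submodule 𝕂 (Fin ℓ → 𝕂),
        K ∈ B → (H ∈ A ∧ K = H.comap Z.subtype) := by
      intro K
      by_cases h : K ∈ B
      · obtain ⟨H, h1, h2, h3⟩ := hBsub h
        exact ⟨H, fun _ => ⟨h1, by rw [h3, comap_subtype_inf_eq]⟩⟩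
      · exact ⟨⊥, fun hk => (h hk).elim⟩
    choose h hh using hE
    refine ⟨locz A Z ∪ h '' B, ?_, ?_⟩
    · rintro H (hH | ⟨K, hK, rfl⟩)
      · exact hH.1
      · exact (hh K hK).1
    · have h1 : sInf B = Submodule.comap Z.subtype (sInf (h '' B)) := by
        rw [sInf_image, Submodule.comap_iInf, sInf_eq_iInf]
        refine iInf_congr fun K => ?_
        rw [Submodule.comap_iInf]
        exact iInf_congr fun hK => (hh K hK).2
      show Submodule.map Z.subtype (sInf B) = _
      rw [h1, Submodule.map_comap_subtype, sInf_union, sInf_locz hZ]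
  -- (ii) locz A Yh is an arrangement
  have hArr : IsArrangement (locz A Yh) :=
    ⟨hA.1.subset fun H hH => hH.1, fun H hH => hA.2 H hH.1⟩
  -- (iii) Z ∈ interLattice (locz A Yh)
  have hZ' : Z ∈ interLattice (locz A Yh) :=
    ⟨locz A Z, fun H hH => ⟨hH.1, le_trans hYZ hH.2⟩, (sInf_locz hZ).symm⟩
  -- (iv) the localization of the restriction is a restriction of a localization
  have hEq : locz (restr A Z) Y = restr (locz A Yh) Z := by
    ext K
    constructor
    · rintro ⟨⟨H, h1, h2, rfl⟩, hYK⟩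
      refine ⟨H, ⟨h1, ?_⟩, h2, rfl⟩
      calc Yh ≤ Submodule.map Z.subtype ((Z ⊓ H).comap Z.subtype) := Submodule.map_mono hYK
        _ = Z ⊓ (Z ⊓ H) := Submodule.map_comap_subtype _ _
        _ ≤ H := le_trans inf_le_right inf_le_right
    · rintro ⟨H, ⟨h1, hYH⟩, h2, rfl⟩
      refine ⟨⟨H, h1, h2, rfl⟩, ?_⟩
      calc Y ≤ Submodule.comap Z.subtype Yh := Submodule.le_comap_map _ _
        _ ≤ Submodule.comap Z.subtype H := Submodule.comap_mono hYH
        _ = (Z ⊓ H).comap Z.subtype := (comap_subtype_inf_eq Z H).symm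
  rw [hEq]
  exact restriction_formal hArr (hlocformal Yh hYh) hZ'
end

section
/- Suppose X ∈ L(A) is a modular element of the intersection lattice of a central arrangement A. If A is formal, then the localization A_X is formal. -/
open Submodule

/-- An element `X ∈ L(A)` is modular if `X + Y ∈ L(A)` for every `Y ∈ L(A)`. -/
def IsModular {𝕂 : Type*} [Field 𝕂] {V : Type*} [AddCommGroup V] [Module 𝕂 V]
    (A : Set (Submodule 𝕂 V)) (X : Submodule 𝕂 V) : Prop :=
  ∀ Y ∈ interLattice A, X ⊔ Y ∈ interLattice A

/-!
Choose `Y ∈ L(A)` with `X ⊔ Y = V` and `X ⊓ Y` contained in every hyperplane of `A`, and a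
complement `D ≤ X` of `Y`; let `π` be the projection onto `Y` along `D`. Precomposition with `π`
fixes `α_H` for `H ∈ A_X`, and by modularity of `X` sends every other `α_H` to `0` or to a multiple
of some `α_H'` with `H' ∈ A_X`. Sending `e_H` to the corresponding multiple of `e_H'` is then a
retraction `F(A) → F(A_X)` that does not lengthen relations, so it carries `F_2(A) = F(A)` over to
`F_2(A_X) = F(A_X)`.
-/

theorem exists_isCompl_le_of_sup_eq_top {α : Type*} [Lattice α] [BoundedOrder α]
    [IsModularLattice α] [ComplementedLattice α] {x y : α} (h : x ⊔ y = ⊤) :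
    ∃ z ≤ x, IsCompl y z := by
  obtain ⟨z, hdisj, hsup⟩ := IsModularLattice.exists_disjoint_and_sup_eq (inf_le_left : x ⊓ y ≤ x)
  have hzx : z ≤ x := hsup ▸ le_sup_right
  refine ⟨z, hzx, ⟨?_, codisjoint_iff.mpr ?_⟩⟩
  · exact disjoint_iff_inf_le.mpr <| (le_inf (le_inf (inf_le_right.trans hzx) inf_le_left)
      inf_le_right).trans hdisj.le_bot
  · rw [← top_le_iff, ← h]
    exact sup_le (hsup ▸ sup_le_sup_right inf_le_right z) le_sup_left

section LinearAlgebra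

variable {𝕂 : Type*} [Field 𝕂] {V : Type*} [AddCommGroup V] [Module 𝕂 V]

theorem IsHyperplane.ne_top {H : Submodule 𝕂 V} (hH : IsHyperplane H) : H ≠ ⊤ := by
  obtain ⟨f, hf, rfl⟩ := hH
  exact fun h => hf (LinearMap.ker_eq_top.mp h)

theorem IsHyperplane.span_singleton_sup_inf_eq {H Y : Submodule 𝕂 V} (hH : IsHyperplane H)
    {v : V} (hvY : v ∈ Y) (hvH : v ∉ H) : (𝕂 ∙ v) ⊔ (Y ⊓ H) = Y := by
  obtain ⟨f, -, rfl⟩ := hH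
  rw [inf_comm, ← sup_inf_assoc_of_le _ ((Submodule.span_singleton_le_iff_mem v Y).mpr hvY),
    LinearMap.span_singleton_sup_ker_eq_top f hvH, top_inf_eq]

theorem isCoatom_of_sup_span_singleton_eq_top {Z : Submodule 𝕂 V} {v : V} (hvZ : v ∉ Z)
    (h : Z ⊔ (𝕂 ∙ v) = ⊤) : IsCoatom Z := by
  have hv : v ≠ 0 := fun hv => hvZ (hv ▸ Z.zero_mem)
  have hcompl : IsCompl Z (𝕂 ∙ v) :=
    ⟨(Submodule.disjoint_span_singleton' hv).mpr hvZ, codisjoint_iff.mpr h⟩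
  exact hcompl.isCoatom_iff_isAtom.mpr (nonzero_span_atom v hv)

theorem Module.Dual.exists_eq_smul_of_ker_le {f g : Module.Dual 𝕂 V}
    (h : LinearMap.ker g ≤ LinearMap.ker f) : ∃ t : 𝕂, f = t • g := by
  have hmem : f ∈ 𝕂 ∙ g := by
    simpa using mem_span_of_iInf_ker_le_ker (L := fun _ : Unit => g) (by simpa using h)
  obtain ⟨t, ht⟩ := Submodule.mem_span_singleton.mp hmem
  exact ⟨t, ht.symm⟩

theorem comp_projection_eq_self_of_le_ker {Y D : Submodule 𝕂 V} (hYD : IsCompl Y D)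
    {f : Module.Dual 𝕂 V} (hD : D ≤ LinearMap.ker f) : f.comp (Y.projection D hYD) = f := by
  ext v
  have hv : v - Y.projection D hYD v ∈ D := by
    rw [← Submodule.projection_eq_self_sub_projection]; exact Submodule.projection_apply_mem _ _
  have hfv := hD hv
  rw [LinearMap.mem_ker, map_sub, sub_eq_zero] at hfv
  exact hfv.symm

end LinearAlgebra

section IntersectionLattice

variable {𝕂 : Type*} [Field 𝕂] {V : Type*} [AddCommGroup V] [Module 𝕂 V]
  {A : Set (Submodule 𝕂 V)}

theorem top_mem_interLattice : ⊤ ∈ interLattice A :=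
  ⟨∅, Set.empty_subset A, sInf_empty.symm⟩

theorem inf_mem_interLattice {Y H : Submodule 𝕂 V} (hY : Y ∈ interLattice A) (hH : H ∈ A) :
    Y ⊓ H ∈ interLattice A := by
  obtain ⟨B, hB, rfl⟩ := hY
  exact ⟨insert H B, Set.insert_subset hH hB, by rw [sInf_insert, inf_comm]⟩

theorem Set.Finite.interLattice (hA : A.Finite) : (interLattice A).Finite := by
  refine (hA.powerset.image sInf).subset ?_
  rintro _ ⟨B, hB, rfl⟩
  exact ⟨B, hB, rfl⟩

theorem mem_of_mem_interLattice_of_isCoatom (hA : ∀ H ∈ A, H ≠ ⊤) {Z : Submodule 𝕂 V}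
    (hZ : Z ∈ interLattice A) (hZc : IsCoatom Z) : Z ∈ A := by
  obtain ⟨B, hB, rfl⟩ := hZ
  obtain ⟨H, hHB⟩ : B.Nonempty := by
    by_contra! hB0
    exact hZc.1 (by rw [hB0, sInf_empty])
  obtain hH | hH := hZc.le_iff.mp (sInf_le hHB)
  · exact absurd hH (hA H (hB hHB))
  · exact hH ▸ hB hHB

theorem sup_inf_eq_top_of_not_inf_le {X Y H : Submodule 𝕂 V} (hH : IsHyperplane H)
    (hXY : X ⊔ Y = ⊤) (hXYH : ¬ X ⊓ Y ≤ H) : X ⊔ (Y ⊓ H) = ⊤ := by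
  obtain ⟨v, ⟨hvX, hvY⟩, hvH⟩ := Set.not_subset.mp hXYH
  calc X ⊔ (Y ⊓ H) = X ⊔ (𝕂 ∙ v) ⊔ (Y ⊓ H) := by
        rw [sup_eq_left.mpr ((Submodule.span_singleton_le_iff_mem v X).mpr hvX)]
    _ = ⊤ := by rw [sup_assoc, hH.span_singleton_sup_inf_eq hvY hvH, hXY]

/-- Take `Y` minimal in `L(A)` with `X ⊔ Y = ⊤`. -/
theorem IsArrangement.exists_mem_interLattice_sup_eq_top (hA : IsArrangement A)
    (X : Submodule 𝕂 V) :
    ∃ Y ∈ interLattice A, X ⊔ Y = ⊤ ∧ ∀ H ∈ A, X ⊓ Y ≤ H := by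
  obtain ⟨Y, ⟨hY, hXY⟩, hmin⟩ := (hA.1.interLattice.subset
    (Set.sep_subset _ fun Y => X ⊔ Y = ⊤)).exists_minimal ⟨⊤, top_mem_interLattice, sup_top_eq X⟩
  refine ⟨Y, hY, hXY, fun H hH => ?_⟩
  by_contra hXYH
  have hYH : Y ≤ Y ⊓ H :=
    hmin ⟨inf_mem_interLattice hY hH, sup_inf_eq_top_of_not_inf_le (hA.2 H hH) hXY hXYH⟩
      inf_le_left
  exact hXYH (inf_le_right.trans (hYH.trans inf_le_right))

end IntersectionLattice

section Modular

variable {𝕂 : Type*} [Field 𝕂] {V : Type*} [AddCommGroup V] [Module 𝕂 V]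
  {A : Set (Submodule 𝕂 V)} {X Y D : Submodule 𝕂 V}

/-- If `Y ⊄ H`, the kernel of `α_H ∘ π` contains `X ⊔ (Y ⊓ H)`, which lies in `L(A)` by
modularity and is a hyperplane, hence belongs to `A_X`. -/
theorem IsModular.comp_projection_eq_zero_or_smul (hA : ∀ H ∈ A, IsHyperplane H)
    (hmod : IsModular A X) (hY : Y ∈ interLattice A) (hXY : X ⊔ Y = ⊤)
    (hcenter : ∀ H ∈ A, X ⊓ Y ≤ H) (hDX : D ≤ X) (hYD : IsCompl Y D)
    {β : Submodule 𝕂 V → Module.Dual 𝕂 V} (hβ : IsDefiningForms A β)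
    {H : Submodule 𝕂 V} (hH : H ∈ A) :
    (β H).comp (Y.projection D hYD) = 0 ∨
      ∃ H' ∈ locz A X, ∃ t : 𝕂, (β H).comp (Y.projection D hYD) = t • β H' := by
  set π := Y.projection D hYD
  have hβH : LinearMap.ker (β H) = H := hβ H hH
  by_cases hYH : Y ≤ H
  · left
    ext v
    exact (hβH ▸ hYH) (Submodule.projection_apply_mem hYD v)
  right
  obtain ⟨v, hvY, hvH⟩ := Set.not_subset.mp hYH
  have hgv : (β H).comp π v ≠ 0 := by
    rw [LinearMap.comp_apply, Submodule.projection_apply_of_mem_left hYD hvY]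
    exact fun h => hvH (hβH ▸ h)
  set Z := X ⊔ (Y ⊓ H)
  have hZker : Z ≤ LinearMap.ker ((β H).comp π) := by
    refine sup_le (fun x hx => ?_) (fun y ⟨hyY, hyH⟩ => ?_)
    · have hxD : x - π x ∈ D := by
        rw [← Submodule.projection_eq_self_sub_projection]
        exact Submodule.projection_apply_mem _ _
      have hπx : π x ∈ X := by simpa using X.sub_mem hx (hDX hxD)
      exact hβH.ge (hcenter H hH ⟨hπx, Submodule.projection_apply_mem hYD x⟩)
    · rw [LinearMap.mem_ker, LinearMap.comp_apply, Submodule.projection_apply_of_mem_left hYD hyY]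
      exact hβH.ge hyH
  have hZ : IsCoatom Z := by
    refine isCoatom_of_sup_span_singleton_eq_top (fun hvZ => hgv (hZker hvZ)) ?_
    rw [sup_assoc, sup_comm (Y ⊓ H), (hA H hH).span_singleton_sup_inf_eq hvY hvH, hXY]
  have hZA : Z ∈ A := mem_of_mem_interLattice_of_isCoatom (fun H' hH' => (hA H' hH').ne_top)
    (hmod _ (inf_mem_interLattice hY hH)) hZ
  obtain ⟨t, ht⟩ := Module.Dual.exists_eq_smul_of_ker_le ((hβ Z hZA).le.trans hZker)
  exact ⟨Z, ⟨hZA, le_sup_left⟩, t, ht⟩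

end Modular

theorem Finsupp.linearCombination_congr_of_mem_supported {ι R M : Type*} [Semiring R]
    [AddCommMonoid M] [Module R M] {s : Set ι} {v w : ι → M} (h : Set.EqOn v w s)
    {c : ι →₀ R} (hc : c ∈ Finsupp.supported R R s) :
    Finsupp.linearCombination R v c = Finsupp.linearCombination R w c := by
  simp only [Finsupp.linearCombination_apply]
  exact Finsupp.sum_congr fun i hi => by rw [h (hc hi)]

theorem Finsupp.card_support_linearCombination_le {ι κ R : Type*} [Semiring R]
    {N : ι → κ →₀ R} (hN : ∀ i, (N i).support.card ≤ 1) (c : ι →₀ R) :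
    (Finsupp.linearCombination R N c).support.card ≤ c.support.card := by
  classical
  calc (Finsupp.linearCombination R N c).support.card
      ≤ (c.support.biUnion fun i => (c i • N i).support).card :=
        Finset.card_le_card Finsupp.support_sum
    _ ≤ ∑ i ∈ c.support, (c i • N i).support.card := Finset.card_biUnion_le
    _ ≤ ∑ _i ∈ c.support, 1 :=
        Finset.sum_le_sum fun i _ => (Finset.card_le_card Finsupp.support_smul).trans (hN i)
    _ = c.support.card := by rw [Finset.card_eq_sum_ones]

section RelationSpace

variable {𝕂 : Type*} [Field 𝕂] {V : Type*} [AddCommGroup V] [Module 𝕂 V]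
  {A A' : Set (Submodule 𝕂 V)} {α β : Submodule 𝕂 V → Module.Dual 𝕂 V}

theorem relSpace_congr (h : ∀ H ∈ A, α H = β H) : relSpace A α = relSpace A β := by
  ext c
  simp only [relSpace, Submodule.mem_inf, LinearMap.mem_ker]
  exact and_congr_right fun hc => by rw [Finsupp.linearCombination_congr_of_mem_supported h hc]

theorem relSpace2_congr (h : ∀ H ∈ A, α H = β H) : relSpace2 A α = relSpace2 A β := by
  rw [relSpace2, relSpace2, relSpace_congr h]

theorem relSpace_mono (h : A' ⊆ A) : relSpace A' α ≤ relSpace A α :=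
  inf_le_inf_right _ (Finsupp.supported_mono h)

theorem relSpace2_eq_relSpace_of_retraction (hA' : A' ⊆ A)
    (Φ : (Submodule 𝕂 V →₀ 𝕂) →ₗ[𝕂] (Submodule 𝕂 V →₀ 𝕂))
    (hΦ : ∀ c ∈ relSpace A α, Φ c ∈ relSpace A' α) (hfix : ∀ c ∈ relSpace A' α, Φ c = c)
    (hcard : ∀ c, (Φ c).support.card ≤ c.support.card) (h : relSpace2 A α = relSpace A α) :
    relSpace2 A' α = relSpace A' α := by
  refine le_antisymm (Submodule.span_le.mpr fun c hc => hc.1) fun c hc => ?_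
  have hmap : (relSpace2 A α).map Φ ≤ relSpace2 A' α :=
    (Submodule.map_span_le _ _ _).mpr fun d ⟨hd, hd3⟩ =>
      Submodule.subset_span ⟨hΦ d hd, (hcard d).trans hd3⟩
  have hcA : c ∈ relSpace2 A α := h ▸ relSpace_mono hA' hc
  simpa only [hfix c hc] using hmap (Submodule.mem_map_of_mem hcA)

theorem relSpace2_eq_relSpace_of_dual_retraction (hA' : A' ⊆ A)
    (P : Module.Dual 𝕂 V →ₗ[𝕂] Module.Dual 𝕂 V) (hfix : ∀ H ∈ A', P (α H) = α H)
    (hP : ∀ H ∈ A, P (α H) = 0 ∨ ∃ H' ∈ A', ∃ t : 𝕂, P (α H) = t • α H')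
    (h : relSpace2 A α = relSpace A α) : relSpace2 A' α = relSpace A' α := by
  classical
  have hN : ∀ H, ∃ d : Submodule 𝕂 V →₀ 𝕂, d.support.card ≤ 1 ∧
      (H ∈ A → ↑d.support ⊆ A' ∧ Finsupp.linearCombination 𝕂 α d = P (α H)) ∧
      (H ∈ A' → d = Finsupp.single H 1) := by
    intro H
    by_cases hH' : H ∈ A'
    · exact ⟨Finsupp.single H 1, Finsupp.card_support_le_one'.mpr ⟨H, 1, rfl⟩,
        fun _ => ⟨by simp [hH'], by simp [hfix H hH']⟩, fun _ => rfl⟩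
    by_cases hH : H ∈ A
    · rcases hP H hH with h0 | ⟨H', hH'A, t, ht⟩
      · exact ⟨0, by simp, fun _ => ⟨by simp, by simp [h0]⟩, fun h => absurd h hH'⟩
      · exact ⟨Finsupp.single H' t, Finsupp.card_support_le_one'.mpr ⟨H', t, rfl⟩,
          fun _ => ⟨(Finset.coe_subset.mpr Finsupp.support_single_subset).trans
            (by simpa using hH'A), by simp [ht]⟩, fun h => absurd h hH'⟩
    · exact ⟨0, by simp, fun h => absurd h hH, fun h => absurd h hH'⟩
  choose N hN1 hNA hNA' using hN
  refine relSpace2_eq_relSpace_of_retraction hA' (Finsupp.linearCombination 𝕂 N)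
    (fun c ⟨hcA, hc0⟩ => ⟨?_, ?_⟩) (fun c ⟨hcA', _⟩ => ?_)
    (Finsupp.card_support_linearCombination_le hN1) h
  · rw [Finsupp.linearCombination_apply]
    exact Submodule.sum_mem _ fun H hH =>
      Submodule.smul_mem _ _ ((Finsupp.mem_supported _ _).mpr (hNA H (hcA hH)).1)
  · have hcomp : Finsupp.linearCombination 𝕂 α (Finsupp.linearCombination 𝕂 N c) =
        P (Finsupp.linearCombination 𝕂 α c) := by
      rw [Finsupp.linearCombination_linearCombination, Finsupp.apply_linearCombination]
      exact Finsupp.linearCombination_congr_of_mem_supported (fun H hH => (hNA H hH).2) hcA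
    exact LinearMap.mem_ker.mpr (by rw [hcomp, LinearMap.mem_ker.mp hc0, map_zero])
  · calc Finsupp.linearCombination 𝕂 N c
        = Finsupp.linearCombination 𝕂 (fun H => Finsupp.single H (1 : 𝕂)) c :=
          Finsupp.linearCombination_congr_of_mem_supported hNA' hcA'
      _ = c := by simp [Finsupp.linearCombination_apply]

end RelationSpace

theorem IsDefiningForms.exists_extend {𝕂 : Type*} [Field 𝕂] {V : Type*} [AddCommGroup V]
    [Module 𝕂 V] {A A' : Set (Submodule 𝕂 V)} {α : Submodule 𝕂 V → Module.Dual 𝕂 V}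
    (hA : ∀ H ∈ A, IsHyperplane H) (hα : IsDefiningForms A' α) :
    ∃ β, IsDefiningForms A β ∧ ∀ H ∈ A', β H = α H := by
  classical
  refine ⟨fun H => if H ∈ A' then α H else if h : IsHyperplane H then h.choose else 0,
    fun H hH => ?_, fun H hH => if_pos hH⟩
  by_cases hH' : H ∈ A'
  · simpa only [if_pos hH'] using hα H hH'
  · simpa only [if_neg hH', dif_pos (hA H hH)] using (hA H hH).choose_spec.2

theorem formal_localization_at_modular_general {𝕂 : Type*} [Field 𝕂] {ℓ : ℕ}
    (A : Set (Submodule 𝕂 (Fin ℓ → 𝕂))) (hA : IsArrangement A)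
    (X : Submodule 𝕂 (Fin ℓ → 𝕂)) (hmod : IsModular A X)
    (hformal : IsFormal A) :
    IsFormal (locz A X) := by
  intro α hα
  obtain ⟨β, hβ, hβα⟩ := hα.exists_extend hA.2
  obtain ⟨Y, hY, hXY, hcenter⟩ := hA.exists_mem_interLattice_sup_eq_top X
  obtain ⟨D, hDX, hYD⟩ := exists_isCompl_le_of_sup_eq_top hXY
  rw [← relSpace2_congr hβα, ← relSpace_congr hβα]
  refine relSpace2_eq_relSpace_of_dual_retraction (fun H hH => hH.1)
    (Y.projection D hYD).dualMap (fun H hH => ?_) (fun H hH => ?_) (hformal β hβ)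
  · exact comp_projection_eq_self_of_le_ker hYD (hDX.trans ((hβ H hH.1).symm ▸ hH.2))
  · exact hmod.comp_projection_eq_zero_or_smul hA.2 hY hXY hcenter hDX hYD hβ hH

/-- **Corollary 5.2** (`cor:modular-formal`): if `X ∈ L(A)` is modular and the central
arrangement `A` is formal, then so is the localization `A_X`. -/
theorem formal_localization_at_modular {𝕂 : Type*} [Field 𝕂] {ℓ : ℕ}
    (A : Set (Submodule 𝕂 (Fin ℓ → 𝕂))) (hA : IsArrangement A)
    (X : Submodule 𝕂 (Fin ℓ → 𝕂)) (hX : X ∈ interLattice A) (hmod : IsModular A X)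
    (hformal : IsFormal A) :
    IsFormal (locz A X) :=
  formal_localization_at_modular_general A hA X hmod hformal
end
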